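/- arXiv:2308.03687 — 4 statements merged into one kernel-verified Lean document; each statement's English description precedes it below -/
import Mathlib

section
/- Let {R_k}, {P_k}, {Q_k} be sequences of nonnegative random variables adapted to a filtration {F_k} such that ∑_{k=1}^∞ Q_k < ∞ almost surely and E[R_{k+1} | F_k] ≤ R_k − P_k + Q_k for all k. Then almost surely ∑_{k=1}^∞ P_k < ∞ and lim_{k→∞} R_k exists and is finite. -/
/-! The process `Y n = R n - ∑_{j<n} (Q j - P j)` is a supermartingale, and the submartingale
`Y 0 - Y` satisfies `Y 0 - Y (n + 1) ≤ Y 0 + ∑_{j≤n} Q j`, a bound known at time `n`. Stopping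
it when this bound first reaches a level `a` gives a submartingale bounded above by `a`, hence
bounded in L¹, hence a.s. convergent; on the event `Y 0 + ∑ Q < a` it is never stopped. So `Y`
converges a.s. on `∑ Q < ∞`, and then so does `R n + ∑_{j<n} P j = Y n + ∑_{j<n} Q j`, which
forces `∑ P < ∞` and the convergence of `R`. -/

open MeasureTheory Filter

namespace MeasureTheory

variable {Ω : Type*} {m0 : MeasurableSpace Ω} {μ : Measure Ω} {ℱ : Filtration ℕ m0}

theorem supermartingale_sub_sum_of_condExp_le [IsFiniteMeasure μ] {X D : ℕ → Ω → ℝ}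
    (hX : StronglyAdapted ℱ X) (hXint : ∀ n, Integrable (X n) μ)
    (hD : StronglyAdapted ℱ D) (hDint : ∀ n, Integrable (D n) μ)
    (hXD : ∀ n, μ[X (n + 1) | ℱ n] ≤ᵐ[μ] X n + D n) :
    Supermartingale (fun n => X n - ∑ j ∈ Finset.range n, D j) ℱ μ := by
  have hSmeas {k n : ℕ} (hkn : k ≤ n + 1) :
      StronglyMeasurable[ℱ n] (∑ j ∈ Finset.range k, D j) :=
    Finset.stronglyMeasurable_sum _ fun j hj =>
      (hD j).mono (ℱ.mono (by have := Finset.mem_range.mp hj; omega))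
  have hSint (k : ℕ) : Integrable (∑ j ∈ Finset.range k, D j) μ :=
    integrable_finsetSum' _ fun j _ => hDint j
  refine supermartingale_nat (fun n => (hX n).sub (hSmeas n.le_succ))
    (fun n => (hXint n).sub (hSint n)) fun n => ?_
  have hcondExp : μ[X (n + 1) - ∑ j ∈ Finset.range (n + 1), D j | ℱ n]
      =ᵐ[μ] μ[X (n + 1) | ℱ n] - ∑ j ∈ Finset.range (n + 1), D j := by
    filter_upwards [condExp_sub (m := ℱ n) (hXint (n + 1)) (hSint (n + 1))] with ω hω
    rw [hω, Pi.sub_apply, Pi.sub_apply,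
      condExp_of_stronglyMeasurable (ℱ.le n) (hSmeas le_rfl) (hSint (n + 1))]
  filter_upwards [hcondExp, hXD n] with ω hω hωXD
  rw [hω]
  simp only [Pi.sub_apply, Pi.add_apply, Finset.sum_range_succ, Finset.sum_apply] at hωXD ⊢
  linarith

theorem stoppedProcess_leastGE_le {Z B : ℕ → Ω → ℝ} {r : ℝ} {ω : Ω} (h0 : Z 0 ω ≤ r)
    (hZB : ∀ n, Z (n + 1) ω ≤ B n ω) (i : ℕ) : stoppedProcess Z (leastGE B r) i ω ≤ r := by
  have h_top : min (WithTop.some i) (leastGE B r ω) ≠ ⊤ :=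
    ne_top_of_le_ne_top (by simp) (min_le_left _ _)
  obtain ⟨m, hm⟩ := WithTop.ne_top_iff_exists.mp h_top
  rw [stoppedProcess, ← hm]
  change Z m ω ≤ r
  rcases m with _ | k
  · exact h0
  · have hk : WithTop.some k < leastGE B r ω :=
      (WithTop.coe_lt_coe.mpr k.lt_succ_self).trans_le (hm.trans_le (min_le_right _ _))
    have hBk : B k ω < r := by
      simpa using notMem_of_lt_hittingAfter hk bot_le
    exact (hZB k).trans hBk.le

theorem Submartingale.eLpNorm_stoppedProcess_leastGE_le [IsFiniteMeasure μ] {Z B : ℕ → Ω → ℝ}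
    {r : ℝ} (hZ : Submartingale Z ℱ μ) (hB : StronglyAdapted ℱ B) (hZ0 : Z 0 = 0) (hr : 0 ≤ r)
    (hZB : ∀ᵐ ω ∂μ, ∀ n, Z (n + 1) ω ≤ B n ω) (i : ℕ) :
    eLpNorm (stoppedProcess Z (leastGE B r) i) 1 μ ≤ 2 * μ Set.univ * ENNReal.ofReal r := by
  have hstopped := hZ.stoppedProcess (hB.isStoppingTime_leastGE r)
  refine eLpNorm_one_le_of_le' (hstopped.integrable i) ?_ ?_
  · rw [← setIntegral_univ]
    refine le_trans ?_ (hstopped.setIntegral_le (Nat.zero_le i) MeasurableSet.univ)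
    simp [stoppedProcess, hZ0]
  · filter_upwards [hZB] with ω hω
    exact stoppedProcess_leastGE_le (by simp [hZ0, hr]) hω i

theorem Submartingale.ae_exists_tendsto_of_bddAbove_predictable_aux [IsFiniteMeasure μ]
    {Z B : ℕ → Ω → ℝ} (hZ : Submartingale Z ℱ μ) (hB : StronglyAdapted ℱ B) (hZ0 : Z 0 = 0)
    (hZB : ∀ᵐ ω ∂μ, ∀ n, Z (n + 1) ω ≤ B n ω) :
    ∀ᵐ ω ∂μ, BddAbove (Set.range fun n => B n ω) →
      ∃ c, Tendsto (fun n => Z n ω) atTop (nhds c) := by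
  have hstopped : ∀ᵐ ω ∂μ, ∀ a : ℕ,
      ∃ c, Tendsto (fun n => stoppedProcess Z (leastGE B a) n ω) atTop (nhds c) := by
    refine ae_all_iff.2 fun a => ?_
    refine (hZ.stoppedProcess (hB.isStoppingTime_leastGE (a : ℝ))).exists_ae_tendsto_of_bdd
      (R := (2 * μ Set.univ * ENNReal.ofReal a).toNNReal) fun i => ?_
    rw [ENNReal.coe_toNNReal (by finiteness)]
    exact hZ.eLpNorm_stoppedProcess_leastGE_le hB hZ0 a.cast_nonneg hZB i
  filter_upwards [hstopped] with ω hω ⟨b, hb⟩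
  obtain ⟨a, hba⟩ := exists_nat_gt b
  have hτ : leastGE B a ω = ⊤ :=
    hittingAfter_eq_top_iff.mpr fun j _ => not_le.mpr ((hb ⟨j, rfl⟩).trans_lt hba)
  simpa only [stoppedProcess_eq_of_le (hτ ▸ le_top)] using hω a

theorem Submartingale.ae_exists_tendsto_of_bddAbove_predictable [IsFiniteMeasure μ]
    {Z B : ℕ → Ω → ℝ} (hZ : Submartingale Z ℱ μ) (hB : StronglyAdapted ℱ B)
    (hZB : ∀ᵐ ω ∂μ, ∀ n, Z (n + 1) ω ≤ B n ω) :
    ∀ᵐ ω ∂μ, BddAbove (Set.range fun n => B n ω) →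
      ∃ c, Tendsto (fun n => Z n ω) atTop (nhds c) := by
  have hZ' : Submartingale (fun n ω => Z n ω - Z 0 ω) ℱ μ :=
    hZ.sub_martingale (martingale_const_fun _ _ (hZ.stronglyAdapted 0) (hZ.integrable 0))
  have hB' : StronglyAdapted ℱ fun n ω => B n ω - Z 0 ω := fun n =>
    (hB n).sub ((hZ.stronglyAdapted 0).mono (ℱ.mono (Nat.zero_le n)))
  have hZB' : ∀ᵐ ω ∂μ, ∀ n, Z (n + 1) ω - Z 0 ω ≤ B n ω - Z 0 ω := by
    filter_upwards [hZB] with ω hω n using sub_le_sub_right (hω n) _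
  filter_upwards [hZ'.ae_exists_tendsto_of_bddAbove_predictable_aux hB'
    (funext fun _ => sub_self _) hZB'] with ω hω ⟨b, hb⟩
  obtain ⟨c, hc⟩ := hω ⟨b - Z 0 ω, fun _ ⟨n, hn⟩ => hn ▸ sub_le_sub_right (hb ⟨n, rfl⟩) _⟩
  exact ⟨c + Z 0 ω, by simpa using hc.add_const (Z 0 ω)⟩

end MeasureTheory

theorem summable_and_exists_tendsto_of_tendsto_sub_sum {r p q : ℕ → ℝ} (hr : ∀ n, 0 ≤ r n)
    (hp : ∀ n, 0 ≤ p n) (hq : Summable q) {c : ℝ}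
    (h : Tendsto (fun n => r n - ∑ j ∈ Finset.range n, (q j - p j)) atTop (nhds c)) :
    Summable p ∧ ∃ l, Tendsto r atTop (nhds l) := by
  have hrp : Tendsto (fun n => r n + ∑ j ∈ Finset.range n, p j) atTop (nhds (c + ∑' j, q j)) := by
    convert h.add hq.hasSum.tendsto_sum_nat using 2 with n
    simp only [Finset.sum_sub_distrib]
    ring
  obtain ⟨b, hb⟩ := hrp.bddAbove_range
  have hp_sum : Summable p :=
    summable_of_sum_range_le hp fun n => (le_add_of_nonneg_left (hr n)).trans (hb ⟨n, rfl⟩)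
  exact ⟨hp_sum, _, by simpa using hrp.sub hp_sum.hasSum.tendsto_sum_nat⟩

/-- Robbins–Siegmund lemma: if `{R_k}, {P_k}, {Q_k}` are nonnegative adapted
sequences with `∑ Q_k < ∞` a.s. and `E[R_{k+1} | F_k] ≤ R_k − P_k + Q_k`,
then a.s. `∑ P_k < ∞` and `lim R_k` exists and is finite. -/
theorem robbins_siegmund {Ω : Type*} {m0 : MeasurableSpace Ω}
    {μ : Measure Ω} [IsProbabilityMeasure μ]
    (ℱ : ℕ → MeasurableSpace Ω) (hle : ∀ k, ℱ k ≤ m0) (hmono : Monotone ℱ)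
    (R P Q : ℕ → Ω → ℝ)
    (hRnn : ∀ k ω, 0 ≤ R k ω) (hPnn : ∀ k ω, 0 ≤ P k ω) (hQnn : ∀ k ω, 0 ≤ Q k ω)
    (hRmeas : ∀ k, StronglyMeasurable[ℱ k] (R k))
    (hPmeas : ∀ k, StronglyMeasurable[ℱ k] (P k))
    (hQmeas : ∀ k, StronglyMeasurable[ℱ k] (Q k))
    (hRint : ∀ k, Integrable (R k) μ)
    (hPint : ∀ k, Integrable (P k) μ)
    (hQint : ∀ k, Integrable (Q k) μ)
    (hQsum : ∀ᵐ ω ∂μ, Summable fun k => Q k ω)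
    (hsup : ∀ k, μ[R (k + 1) | ℱ k] ≤ᵐ[μ] fun ω => R k ω - P k ω + Q k ω) :
    ∀ᵐ ω ∂μ, Summable (fun k => P k ω) ∧
      ∃ r : ℝ, Tendsto (fun k => R k ω) atTop (nhds r) := by
  let 𝒢 : Filtration ℕ m0 := ⟨ℱ, hmono, hle⟩
  have hY : Supermartingale (fun n => R n - ∑ j ∈ Finset.range n, (Q j - P j)) 𝒢 μ :=
    supermartingale_sub_sum_of_condExp_le hRmeas hRint (fun n => (hQmeas n).sub (hPmeas n))
      (fun n => (hQint n).sub (hPint n))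
      fun n => (hsup n).trans <| ae_of_all _ fun ω => by
        simp only [Pi.add_apply, Pi.sub_apply]
        linarith
  have hB : StronglyAdapted 𝒢 fun n => ∑ j ∈ Finset.range (n + 1), Q j := fun n =>
    Finset.stronglyMeasurable_sum _ fun j hj =>
      (hQmeas j).mono (hmono (Nat.lt_succ_iff.mp (Finset.mem_range.mp hj)))
  have hYB : ∀ n ω, -(R (n + 1) - ∑ j ∈ Finset.range (n + 1), (Q j - P j)) ω ≤
      (∑ j ∈ Finset.range (n + 1), Q j) ω := fun n ω => by
    simp only [Pi.sub_apply, Finset.sum_apply, Finset.sum_sub_distrib]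
    linarith [hRnn (n + 1) ω, Finset.sum_nonneg fun j (_ : j ∈ Finset.range (n + 1)) => hPnn j ω]
  filter_upwards [hY.neg.ae_exists_tendsto_of_bddAbove_predictable hB
    (ae_of_all _ fun ω n => hYB n ω), hQsum] with ω hconv hQω
  obtain ⟨c, hc⟩ := hconv ⟨∑' k, Q k ω, fun _ ⟨n, hn⟩ => hn ▸ by
    simpa only [Finset.sum_apply] using hQω.sum_le_tsum _ fun j _ => hQnn j ω⟩
  exact summable_and_exists_tendsto_of_tendsto_sub_sum (hRnn · ω) (hPnn · ω) hQω
    (c := -c) (by simpa [Finset.sum_apply] using hc.neg)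
end

section
/- Let H ∈ 𝕊^n be symmetric with ‖H‖₂ ≤ κ_H and uᵀHu ≥ ζ‖u‖₂² for all u in a linear subspace N ⊆ ℝ^n, where 0 < ζ ≤ κ_H. Then there exists κ_{uv} > 0 (any κ_{uv} with 2κ_H/√κ_{uv} + κ_H/κ_{uv} ≤ ζ/2 suffices) such that for all u ∈ N and v ∈ N^⊥ with ‖u‖₂² ≥ κ_{uv}‖v‖₂², one has (u+v)ᵀH(u+v) ≥ (ζ/2)‖u‖₂². -/
open scoped RealInnerProductSpace

/-!
Expanding `⟪H (u + v), u + v⟫`, everything except `⟪H u, u⟫ ≥ ζ‖u‖²` is bounded in absolute value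
by `κH (2‖u‖‖v‖ + ‖v‖²)`, and `√κuv ‖v‖ ≤ ‖u‖` turns this into
`(2κH/√κuv + κH/κuv) ‖u‖² ≤ (ζ/2) ‖u‖²`: the perturbation eats at most half of the curvature.
-/

section OperatorBounds

variable {E : Type*} [NormedAddCommGroup E] [InnerProductSpace ℝ E]
  {T : E →L[ℝ] E} {κ : ℝ}

theorem abs_inner_apply_le_of_opNorm_le (hT : ‖T‖ ≤ κ) (x y : E) :
    |⟪T x, y⟫| ≤ κ * ‖x‖ * ‖y‖ :=
  calc |⟪T x, y⟫| ≤ ‖T x‖ * ‖y‖ := abs_real_inner_le_norm _ _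
    _ ≤ ‖T‖ * ‖x‖ * ‖y‖ := by gcongr; exact T.le_opNorm x
    _ ≤ κ * ‖x‖ * ‖y‖ := by gcongr

theorem inner_apply_self_sub_le_inner_apply_add_self (hT : ‖T‖ ≤ κ) (u v : E) :
    ⟪T u, u⟫ - κ * (2 * ‖u‖ * ‖v‖ + ‖v‖ ^ 2) ≤ ⟪T (u + v), u + v⟫ := by
  have hexpand : ⟪T (u + v), u + v⟫ = ⟪T u, u⟫ + ⟪T u, v⟫ + ⟪T v, u⟫ + ⟪T v, v⟫ := by
    rw [map_add, inner_add_left, inner_add_right, inner_add_right]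
    ring
  have huv := neg_le_of_abs_le (abs_inner_apply_le_of_opNorm_le hT u v)
  have hvu := neg_le_of_abs_le (abs_inner_apply_le_of_opNorm_le hT v u)
  have hvv := neg_le_of_abs_le (abs_inner_apply_le_of_opNorm_le hT v v)
  rw [hexpand]
  nlinarith

end OperatorBounds

theorem two_mul_mul_add_sq_le_of_mul_sq_le {a b k : ℝ} (ha : 0 ≤ a) (hb : 0 ≤ b) (hk : 0 < k)
    (hab : k * b ^ 2 ≤ a ^ 2) :
    2 * a * b + b ^ 2 ≤ (2 / Real.sqrt k + 1 / k) * a ^ 2 := by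
  have hsqrt : 0 < Real.sqrt k := Real.sqrt_pos.mpr hk
  have hb_le : Real.sqrt k * b ≤ a := by
    rw [← Real.sqrt_sq hb, ← Real.sqrt_mul hk.le, ← Real.sqrt_sq ha]
    exact Real.sqrt_le_sqrt hab
  have hcross : 2 * a * b ≤ 2 / Real.sqrt k * a ^ 2 := by
    rw [div_mul_eq_mul_div, le_div_iff₀ hsqrt]
    nlinarith
  have hsq : b ^ 2 ≤ 1 / k * a ^ 2 := by
    rw [one_div_mul_eq_div, le_div_iff₀ hk]
    linarith
  linarith

theorem exists_pos_two_mul_div_sqrt_add_div_le {κ ζ : ℝ} (hκ : 0 ≤ κ) (hζ : 0 < ζ) :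
    ∃ k : ℝ, 0 < k ∧ 2 * κ / Real.sqrt k + κ / k ≤ ζ / 2 := by
  -- `k = t²` with `t ≥ 1`, so the left side is at most `3κ / t`
  set t := 6 * κ / ζ + 1 with ht
  have ht1 : 1 ≤ t := le_add_of_nonneg_left (by positivity)
  have ht0 : 0 < t := by linarith
  have hζt : ζ / 2 * t = 3 * κ + ζ / 2 := by rw [ht]; field_simp; ring
  refine ⟨t ^ 2, by positivity, ?_⟩
  rw [Real.sqrt_sq ht0.le]
  have hsq : κ / t ^ 2 ≤ κ / t := div_le_div_of_nonneg_left hκ ht0 (by nlinarith)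
  have h3 : 3 * κ / t ≤ ζ / 2 := by rw [div_le_iff₀ ht0]; linarith
  have : 2 * κ / t + κ / t = 3 * κ / t := by ring
  linarith

theorem half_curvature_le_inner_apply_add_self {E : Type*} [NormedAddCommGroup E]
    [InnerProductSpace ℝ E] {T : E →L[ℝ] E} {κ ζ k : ℝ} (hT : ‖T‖ ≤ κ) (hk : 0 < k)
    (hkζ : 2 * κ / Real.sqrt k + κ / k ≤ ζ / 2) {u v : E} (hu : ζ * ‖u‖ ^ 2 ≤ ⟪T u, u⟫)
    (huv : k * ‖v‖ ^ 2 ≤ ‖u‖ ^ 2) :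
    ζ / 2 * ‖u‖ ^ 2 ≤ ⟪T (u + v), u + v⟫ := by
  have hκ : 0 ≤ κ := (norm_nonneg T).trans hT
  have hperturb := inner_apply_self_sub_le_inner_apply_add_self hT u v
  have hsmall : κ * (2 * ‖u‖ * ‖v‖ + ‖v‖ ^ 2) ≤ ζ / 2 * ‖u‖ ^ 2 :=
    calc κ * (2 * ‖u‖ * ‖v‖ + ‖v‖ ^ 2)
        ≤ κ * ((2 / Real.sqrt k + 1 / k) * ‖u‖ ^ 2) := by
          gcongr
          exact two_mul_mul_add_sq_le_of_mul_sq_le (norm_nonneg u) (norm_nonneg v) hk huv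
      _ = (2 * κ / Real.sqrt k + κ / k) * ‖u‖ ^ 2 := by ring
      _ ≤ ζ / 2 * ‖u‖ ^ 2 := by gcongr
  linarith

theorem curvature_on_nullspace_general {n : ℕ}
    (H : EuclideanSpace ℝ (Fin n) →L[ℝ] EuclideanSpace ℝ (Fin n))
    (κH ζ : ℝ) (hζ : 0 < ζ) (hHnorm : ‖H‖ ≤ κH)
    (N : Submodule ℝ (EuclideanSpace ℝ (Fin n)))
    (hN : ∀ u ∈ N, ζ * ‖u‖ ^ 2 ≤ ⟪H u, u⟫) :
    ∃ κuv : ℝ, 0 < κuv ∧ 2 * κH / Real.sqrt κuv + κH / κuv ≤ ζ / 2 ∧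
      ∀ u ∈ N, ∀ v ∈ Nᗮ, κuv * ‖v‖ ^ 2 ≤ ‖u‖ ^ 2 →
        ζ / 2 * ‖u‖ ^ 2 ≤ ⟪H (u + v), u + v⟫ := by
  obtain ⟨k, hk, hkζ⟩ :=
    exists_pos_two_mul_div_sqrt_add_div_le ((norm_nonneg H).trans hHnorm) hζ
  exact ⟨k, hk, hkζ, fun u hu v _ huv =>
    half_curvature_le_inner_apply_add_self hHnorm hk hkζ (hN u hu) huv⟩

/-- If a symmetric `H` with `‖H‖₂ ≤ κ_H` satisfies `uᵀHu ≥ ζ‖u‖²` on a subspace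
`N`, then there is `κ_{uv} > 0` (any one with `2κ_H/√κ_{uv} + κ_H/κ_{uv} ≤ ζ/2`)
such that `‖u‖² ≥ κ_{uv}‖v‖²` for `u ∈ N`, `v ∈ Nᗮ` implies
`(u+v)ᵀH(u+v) ≥ (ζ/2)‖u‖²`. -/
theorem curvature_on_nullspace {n : ℕ}
    (H : EuclideanSpace ℝ (Fin n) →L[ℝ] EuclideanSpace ℝ (Fin n))
    (hsymm : IsSelfAdjoint H)
    (κH ζ : ℝ) (hζ : 0 < ζ) (hζκ : ζ ≤ κH) (hHnorm : ‖H‖ ≤ κH)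
    (N : Submodule ℝ (EuclideanSpace ℝ (Fin n)))
    (hN : ∀ u ∈ N, ζ * ‖u‖ ^ 2 ≤ ⟪H u, u⟫) :
    ∃ κuv : ℝ, 0 < κuv ∧ 2 * κH / Real.sqrt κuv + κH / κuv ≤ ζ / 2 ∧
      ∀ u ∈ N, ∀ v ∈ Nᗮ, κuv * ‖v‖ ^ 2 ≤ ‖u‖ ^ 2 →
        ζ / 2 * ‖u‖ ^ 2 ≤ ⟪H (u + v), u + v⟫ :=
  curvature_on_nullspace_general H κH ζ hζ hHnorm N hN
end

section
/- Suppose the linear system [[H, J], [Jᵀ, 0]][d; y] = −[g; c] is solved, where J ∈ ℝ^{n×m} has full column rank, Z ∈ ℝ^{n×(n−m)} has columns forming a basis of Null(Jᵀ), and ZᵀHZ is invertible. Then y = J⁺(I − HZ(ZᵀHZ)⁻¹Zᵀ)(H(J⁺)ᵀc − g), where J⁺ = (JᵀJ)⁻¹Jᵀ. -/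
open Matrix

/-!
Since `J` has full column rank, `JᵀJ` is invertible and `J⁺ = (JᵀJ)⁻¹Jᵀ` is a left inverse
of `J`, so the first KKT equation gives `y = −J⁺(g + H d)`. The second equation is solved by
`V = −(J⁺)ᵀc` up to an element `Z w` of `Null(Jᵀ)`; multiplying the first equation by `Zᵀ`
kills `J y` and leaves the reduced system `(ZᵀHZ) w = −Zᵀ(g + H V)`. Substituting
`d = V − Z(ZᵀHZ)⁻¹Zᵀ(g + H V)` gives `g + H d = (I − HZ(ZᵀHZ)⁻¹Zᵀ)(g + H V)`.
-/

theorem isUnit_of_rank_eq_card {K m : Type*} [Field K] [Fintype m] [DecidableEq m]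
    {A : Matrix m m K} (h : A.rank = Fintype.card m) : IsUnit A := by
  rw [← mulVec_surjective_iff_isUnit, ← coe_mulVecLin, ← LinearMap.range_eq_top]
  exact Submodule.eq_top_of_finrank_eq (by rwa [Module.finrank_fintype_fun_eq_card])

theorem isUnit_det_transpose_mul_self_of_rank_eq_card {R n m : Type*} [Field R] [LinearOrder R]
    [IsStrictOrderedRing R] [Fintype n] [Fintype m] [DecidableEq m] {J : Matrix n m R}
    (hJ : J.rank = Fintype.card m) : IsUnit (Jᵀ * J).det :=
  (isUnit_iff_isUnit_det _).mp <| isUnit_of_rank_eq_card <| by rw [rank_transpose_mul_self, hJ]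

section

variable {R n m k : Type*} [CommRing R] [Fintype n] [Fintype m] [Fintype k]

theorem eq_mulVec_neg_add_of_mulVec_add_mulVec_eq_neg [DecidableEq m] {J : Matrix n m R}
    {L : Matrix m n R} (hLJ : L * J = 1) {H : Matrix n n R} {d g : n → R} {y : m → R}
    (h : H *ᵥ d + J *ᵥ y = -g) : y = L *ᵥ -(g + H *ᵥ d) := by
  rw [← one_mulVec y, ← hLJ, ← mulVec_mulVec, eq_neg_add_of_add_eq h, neg_add_rev]

theorem exists_eq_mulVec_add_of_mulVec_eq [DecidableEq m] {A : Matrix m n R}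
    {P : Matrix n m R} (hAP : A * P = 1) {Z : Matrix n k R}
    (hker : ∀ w, A *ᵥ w = 0 → ∃ z, w = Z *ᵥ z) {d : n → R} {b : m → R} (h : A *ᵥ d = b) :
    ∃ z, d = Z *ᵥ z + P *ᵥ b := by
  obtain ⟨z, hz⟩ := hker (d - P *ᵥ b) <| by
    rw [mulVec_sub, mulVec_mulVec, hAP, one_mulVec, h, sub_self]
  exact ⟨z, by rw [← hz, sub_add_cancel]⟩

theorem eq_sub_mulVec_of_transpose_mul_eq_zero [DecidableEq k] {J : Matrix n m R}
    {Z : Matrix n k R} (hJZ : Jᵀ * Z = 0) {H : Matrix n n R} (hZHZ : IsUnit (Zᵀ * H * Z).det)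
    {d v g : n → R} {w : k → R} {y : m → R} (hd : d = Z *ᵥ w + v)
    (h : H *ᵥ d + J *ᵥ y = -g) : d = v - (Z * (Zᵀ * H * Z)⁻¹ * Zᵀ) *ᵥ (g + H *ᵥ v) := by
  have hZJ : Zᵀ * J = 0 := by
    rw [← transpose_transpose (Zᵀ * J), transpose_mul, transpose_transpose, hJZ, transpose_zero]
  have hreduced : (Zᵀ * H * Z) *ᵥ w = -(Zᵀ *ᵥ (g + H *ᵥ v)) := by
    have := congrArg (Zᵀ *ᵥ ·) h
    simp only [hd, mulVec_add, mulVec_mulVec, hZJ, zero_mulVec, mulVec_neg] at this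
    simp only [mulVec_add, mulVec_mulVec, Matrix.mul_assoc]
    linear_combination (norm := module) this
  have hw : w = -((Zᵀ * H * Z)⁻¹ * Zᵀ) *ᵥ (g + H *ᵥ v) := by
    rw [neg_mulVec, ← mulVec_mulVec, ← mulVec_neg, ← hreduced, mulVec_mulVec,
      nonsing_inv_mul _ hZHZ, one_mulVec]
  rw [hd, hw, mulVec_mulVec, Matrix.mul_neg, neg_mulVec, ← Matrix.mul_assoc]
  abel

end

theorem sqp_multiplier_formula_general {n m : ℕ}
    (H : Matrix (Fin n) (Fin n) ℝ)
    (J : Matrix (Fin n) (Fin m) ℝ) (hJ : J.rank = m)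
    (Z : Matrix (Fin n) (Fin (n - m)) ℝ)
    (hJZ : Jᵀ * Z = 0)
    (hspan : ∀ w : Fin n → ℝ, Jᵀ *ᵥ w = 0 → ∃ z : Fin (n - m) → ℝ, w = Z *ᵥ z)
    (hZHZ : IsUnit (Zᵀ * H * Z).det)
    (d : Fin n → ℝ) (y : Fin m → ℝ) (g : Fin n → ℝ) (c : Fin m → ℝ)
    (hsys1 : H *ᵥ d + J *ᵥ y = -g) (hsys2 : Jᵀ *ᵥ d = -c) :
    y = ((Jᵀ * J)⁻¹ * Jᵀ) *ᵥ
      ((1 - H * Z * (Zᵀ * H * Z)⁻¹ * Zᵀ) *ᵥ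
        (H *ᵥ (((Jᵀ * J)⁻¹ * Jᵀ)ᵀ *ᵥ c) - g)) := by
  set Jpinv := (Jᵀ * J)⁻¹ * Jᵀ
  have hJtJ : IsUnit (Jᵀ * J).det :=
    isUnit_det_transpose_mul_self_of_rank_eq_card (by rw [hJ, Fintype.card_fin])
  have hleft : Jpinv * J = 1 := by rw [Matrix.mul_assoc, nonsing_inv_mul _ hJtJ]
  have hright : Jᵀ * Jpinvᵀ = 1 := by rw [← transpose_mul, hleft, transpose_one]
  obtain ⟨w, hd⟩ := exists_eq_mulVec_add_of_mulVec_eq hright hspan hsys2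
  rw [eq_mulVec_neg_add_of_mulVec_add_mulVec_eq_neg hleft hsys1,
    eq_sub_mulVec_of_transpose_mul_eq_zero hJZ hZHZ hd hsys1]
  congr 1
  simp only [sub_mulVec, one_mulVec, mulVec_sub, mulVec_add, mulVec_neg, mulVec_mulVec,
    Matrix.sub_mul, Matrix.one_mul, Matrix.mul_assoc]
  abel

/-- Closed-form expression for the SQP Lagrange multiplier: if
`H d + J y = −g` and `Jᵀ d = −c`, with `J` of full column rank, `Z` a basis of
`Null(Jᵀ)`, and `ZᵀHZ` invertible, then
`y = J⁺(I − HZ(ZᵀHZ)⁻¹Zᵀ)(H(J⁺)ᵀc − g)` where `J⁺ = (JᵀJ)⁻¹Jᵀ`. -/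
theorem sqp_multiplier_formula {n m : ℕ} (hmn : m ≤ n)
    (H : Matrix (Fin n) (Fin n) ℝ)
    (J : Matrix (Fin n) (Fin m) ℝ) (hJ : J.rank = m)
    (Z : Matrix (Fin n) (Fin (n - m)) ℝ)
    (hJZ : Jᵀ * Z = 0)
    (hspan : ∀ w : Fin n → ℝ, Jᵀ *ᵥ w = 0 → ∃ z : Fin (n - m) → ℝ, w = Z *ᵥ z)
    (hZHZ : IsUnit (Zᵀ * H * Z).det)
    (d : Fin n → ℝ) (y : Fin m → ℝ) (g : Fin n → ℝ) (c : Fin m → ℝ)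
    (hsys1 : H *ᵥ d + J *ᵥ y = -g) (hsys2 : Jᵀ *ᵥ d = -c) :
    y = ((Jᵀ * J)⁻¹ * Jᵀ) *ᵥ
      ((1 - H * Z * (Zᵀ * H * Z)⁻¹ * Zᵀ) *ᵥ
        (H *ᵥ (((Jᵀ * J)⁻¹ * Jᵀ)ᵀ *ᵥ c) - g)) :=
  sqp_multiplier_formula_general H J hJ Z hJZ hspan hZHZ d y g c hsys1 hsys2
end

section
/- Suppose for all k in a neighborhood condition, Y_k = M(X_k)(H(X_k)(∇c(X_k)⁺)ᵀc(X_k) − G_k) and y_⋆ = −M(x_⋆)∇f(x_⋆) with c(x_⋆) = 0. Assume: ‖c(x) − c(x̄)‖₂ ≤ L_c‖x − x̄‖₂, ‖∇f(x) − ∇f(x̄)‖₂ ≤ L_{∇f}‖x − x̄‖₂, ‖∇f(x)‖₂ ≤ κ_{∇f}, ‖H(x)‖₂ ≤ κ_H, σ_min(∇c(x)) ≥ r, ‖M(x)‖₂ ≤ r^{−1}, and ‖M(x) − M(x̄)‖₂ ≤ L_M‖x − x̄‖₂ for all x, x̄ in the neighborhood. Then ‖Y_k − y_⋆‖₂ ≤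 κ_y‖X_k − x_⋆‖₂ + r^{−1}‖∇f(X_k) − G_k‖₂, where κ_y := κ_H L_c r^{−2} + L_{∇f} r^{−1} + κ_{∇f} L_M. -/
/-!
Write `Yₖ − y⋆` as the sum of `M(Xₖ) H(Xₖ) (∇c(Xₖ)⁺)ᵀ c(Xₖ)`, `M(Xₖ) (∇f(Xₖ) − Gₖ)`,
`M(Xₖ) (∇f(x⋆) − ∇f(Xₖ))` and `(M(x⋆) − M(Xₖ)) ∇f(x⋆)`, and bound each term by
submultiplicativity of the operator norm, using `c(x⋆) = 0` for the first one.
The only step that is not routine is `‖(J⁺)ᵀ‖ ≤ r⁻¹` when `σ_min(J) ≥ r`: writing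
`(J⁺)ᵀ v = J w` with `JᵀJ w = v`, one has `‖J w‖² = ⟪w, v⟫ ≤ ‖w‖ ‖v‖ ≤ r⁻¹ ‖J w‖ ‖v‖`.
-/

open Matrix Metric
open scoped Matrix.Norms.L2Operator

/-- View a plain tuple as an element of Euclidean space (for the `ℓ²` norm). -/
def toE {k : ℕ} (x : Fin k → ℝ) : EuclideanSpace ℝ (Fin k) := WithLp.toLp 2 x

/-- View a Euclidean vector as a plain tuple. -/
def toV {k : ℕ} (x : EuclideanSpace ℝ (Fin k)) : Fin k → ℝ := x

/-- Moore–Penrose pseudoinverse of a full-column-rank matrix. -/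
noncomputable def Matrix.pinv {n m : ℕ} (A : Matrix (Fin n) (Fin m) ℝ) :
    Matrix (Fin m) (Fin n) ℝ :=
  (Aᵀ * A)⁻¹ * Aᵀ

section

variable {k l : ℕ}

lemma norm_toE_mulVec_le_of_le {A : Matrix (Fin k) (Fin l) ℝ} {x : EuclideanSpace ℝ (Fin l)}
    {a b : ℝ} (hA : ‖A‖ ≤ a) (hx : ‖x‖ ≤ b) : ‖toE (A *ᵥ toV x)‖ ≤ a * b :=
  (A.l2_opNorm_mulVec x).trans <| mul_le_mul hA hx (norm_nonneg x) ((norm_nonneg A).trans hA)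

lemma norm_toE_mulVec_sq_le (J : Matrix (Fin k) (Fin l) ℝ) (w : Fin l → ℝ) :
    ‖toE (J *ᵥ w)‖ ^ 2 ≤ ‖toE w‖ * ‖toE ((Jᵀ * J) *ᵥ w)‖ := by
  have h : ‖toE (J *ᵥ w)‖ ^ 2 = inner ℝ (toE w) (toE ((Jᵀ * J) *ᵥ w)) := by
    rw [← real_inner_self_eq_norm_sq]
    change (J *ᵥ w) ⬝ᵥ star (J *ᵥ w) = ((Jᵀ * J) *ᵥ w) ⬝ᵥ star w
    rw [star_trivial, star_trivial, ← mulVec_mulVec, dotProduct_comm _ w,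
      dotProduct_transpose_mulVec]
  exact h ▸ real_inner_le_norm _ _

variable {J : Matrix (Fin k) (Fin l) ℝ} {r : ℝ}

lemma norm_toE_mulVec_le_of_lower_bound (hr : 0 < r)
    (hJ : ∀ w : EuclideanSpace ℝ (Fin l), r * ‖w‖ ≤ ‖toE (J *ᵥ toV w)‖) (w : Fin l → ℝ) :
    ‖toE (J *ᵥ w)‖ ≤ r⁻¹ * ‖toE ((Jᵀ * J) *ᵥ w)‖ := by
  have hw : ‖toE w‖ ≤ r⁻¹ * ‖toE (J *ᵥ w)‖ := (le_inv_mul_iff₀ hr).2 (hJ (toE w))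
  rcases (norm_nonneg (toE (J *ᵥ w))).eq_or_lt with h0 | hpos
  · rw [← h0]; positivity
  · refine le_of_mul_le_mul_left ?_ hpos
    calc ‖toE (J *ᵥ w)‖ * ‖toE (J *ᵥ w)‖ ≤ ‖toE w‖ * ‖toE ((Jᵀ * J) *ᵥ w)‖ :=
          (sq _).symm.trans_le (norm_toE_mulVec_sq_le J w)
      _ ≤ r⁻¹ * ‖toE (J *ᵥ w)‖ * ‖toE ((Jᵀ * J) *ᵥ w)‖ := by gcongr
      _ = _ := by ring

lemma isUnit_transpose_mul_self_of_lower_bound (hr : 0 < r)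
    (hJ : ∀ w : EuclideanSpace ℝ (Fin l), r * ‖w‖ ≤ ‖toE (J *ᵥ toV w)‖) :
    IsUnit (Jᵀ * J) := by
  refine mulVec_injective_iff_isUnit.1 fun a b hab => sub_eq_zero.1 ?_
  have hgram : toE ((Jᵀ * J) *ᵥ (a - b)) = 0 := by rw [mulVec_sub, hab, sub_self]; rfl
  have hJ0 : ‖toE (J *ᵥ (a - b))‖ ≤ 0 := by
    simpa [hgram] using norm_toE_mulVec_le_of_lower_bound hr hJ (a - b)
  have hrab : r * ‖toE (a - b)‖ ≤ 0 := (hJ (toE (a - b))).trans hJ0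
  exact congrArg toV (norm_le_zero_iff.1 (nonpos_of_mul_nonpos_right hrab hr))

lemma norm_pinv_transpose_mulVec_le (hr : 0 < r)
    (hJ : ∀ w : EuclideanSpace ℝ (Fin l), r * ‖w‖ ≤ ‖toE (J *ᵥ toV w)‖)
    (v : EuclideanSpace ℝ (Fin l)) :
    ‖toE (J.pinvᵀ *ᵥ toV v)‖ ≤ r⁻¹ * ‖v‖ := by
  have hdet := (isUnit_transpose_mul_self_of_lower_bound hr hJ).map detMonoidHom
  have hpinv : J.pinvᵀ *ᵥ toV v = J *ᵥ ((Jᵀ * J)⁻¹ *ᵥ toV v) := by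
    rw [pinv, transpose_mul, transpose_transpose, mulVec_mulVec, transpose_nonsing_inv,
      transpose_mul, transpose_transpose]
  have hgram : (Jᵀ * J) *ᵥ ((Jᵀ * J)⁻¹ *ᵥ toV v) = toV v := by
    rw [mulVec_mulVec, mul_nonsing_inv _ hdet, one_mulVec]
  have h := norm_toE_mulVec_le_of_lower_bound hr hJ ((Jᵀ * J)⁻¹ *ᵥ toV v)
  rwa [hgram, ← hpinv] at h

end

theorem multiplier_error_bound_general {n m : ℕ}
    (Jc : EuclideanSpace ℝ (Fin n) → Matrix (Fin n) (Fin m) ℝ)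
    (cf : EuclideanSpace ℝ (Fin n) → EuclideanSpace ℝ (Fin m))
    (gradf : EuclideanSpace ℝ (Fin n) → EuclideanSpace ℝ (Fin n))
    (M : EuclideanSpace ℝ (Fin n) → Matrix (Fin m) (Fin n) ℝ)
    (Hm : EuclideanSpace ℝ (Fin n) → Matrix (Fin n) (Fin n) ℝ)
    (ε r Lc Lf κf κH LM : ℝ)
    (hr : 0 < r)
    (xstar Xk Gk : EuclideanSpace ℝ (Fin n))
    (hXk : Xk ∈ closedBall xstar ε)
    (hcstar : cf xstar = 0)
    -- Lipschitz continuity of `c`, `∇f`, and `M` on the neighborhood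
    (hcLip : ∀ x ∈ closedBall xstar ε, ∀ x' ∈ closedBall xstar ε,
      ‖cf x - cf x'‖ ≤ Lc * ‖x - x'‖)
    (hgLip : ∀ x ∈ closedBall xstar ε, ∀ x' ∈ closedBall xstar ε,
      ‖gradf x - gradf x'‖ ≤ Lf * ‖x - x'‖)
    (hMLip : ∀ x ∈ closedBall xstar ε, ∀ x' ∈ closedBall xstar ε,
      ‖M x - M x'‖ ≤ LM * ‖x - x'‖)
    -- bounds on the neighborhood
    (hgbd : ∀ x ∈ closedBall xstar ε, ‖gradf x‖ ≤ κf)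
    (hHbd : ∀ x ∈ closedBall xstar ε, ‖Hm x‖ ≤ κH)
    (hMbd : ∀ x ∈ closedBall xstar ε, ‖M x‖ ≤ r⁻¹)
    (hsmin : ∀ x ∈ closedBall xstar ε, ∀ w : EuclideanSpace ℝ (Fin m),
      r * ‖w‖ ≤ ‖toE (Jc x *ᵥ toV w)‖)
    -- multiplier formulas
    (Yk : EuclideanSpace ℝ (Fin m)) (ystar : EuclideanSpace ℝ (Fin m))
    (hYk : Yk = toE (M Xk *ᵥ
      (Hm Xk *ᵥ ((Jc Xk).pinvᵀ *ᵥ toV (cf Xk)) - toV Gk)))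
    (hystar : ystar = -toE (M xstar *ᵥ toV (gradf xstar))) :
    ‖Yk - ystar‖ ≤ (κH * Lc * r⁻¹ ^ 2 + Lf * r⁻¹ + κf * LM) * ‖Xk - xstar‖ +
      r⁻¹ * ‖gradf Xk - Gk‖ := by
  have hx0 : xstar ∈ closedBall xstar ε := mem_closedBall_self (dist_nonneg.trans hXk)
  set d := ‖Xk - xstar‖
  set P := toE ((Jc Xk).pinvᵀ *ᵥ toV (cf Xk))
  set HP := toE (Hm Xk *ᵥ toV P)
  have hsplit : Yk - ystar = toE (M Xk *ᵥ toV HP) + toE (M Xk *ᵥ toV (gradf Xk - Gk)) +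
      toE (M Xk *ᵥ toV (gradf xstar - gradf Xk)) +
      toE ((M xstar - M Xk) *ᵥ toV (gradf xstar)) := by
    ext i
    simp only [hYk, hystar, HP, P, toE, toV, mulVec_mulVec, mulVec_sub, sub_mulVec,
      sub_neg_eq_add, WithLp.toLp_sub, WithLp.ofLp_sub, PiLp.add_apply, PiLp.sub_apply]
    ring
  have hc : ‖cf Xk‖ ≤ Lc * d := by simpa [hcstar] using hcLip Xk hXk xstar hx0
  have hP : ‖P‖ ≤ r⁻¹ * (Lc * d) :=
    (norm_pinv_transpose_mulVec_le hr (hsmin Xk hXk) _).trans (by gcongr)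
  have hg : ‖gradf xstar - gradf Xk‖ ≤ Lf * d := by
    simpa [norm_sub_rev xstar] using hgLip xstar hx0 Xk hXk
  have hM : ‖M xstar - M Xk‖ ≤ LM * d := by
    simpa [norm_sub_rev xstar] using hMLip xstar hx0 Xk hXk
  calc ‖Yk - ystar‖
      ≤ r⁻¹ * (κH * (r⁻¹ * (Lc * d))) + r⁻¹ * ‖gradf Xk - Gk‖ + r⁻¹ * (Lf * d) +
          LM * d * κf := by
        rw [hsplit]
        refine norm_add₄_le.trans ?_
        gcongr ?_ + ?_ + ?_ + ?_
        · exact norm_toE_mulVec_le_of_le (hMbd Xk hXk)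
            (norm_toE_mulVec_le_of_le (hHbd Xk hXk) hP)
        · exact norm_toE_mulVec_le_of_le (hMbd Xk hXk) le_rfl
        · exact norm_toE_mulVec_le_of_le (hMbd Xk hXk) hg
        · exact norm_toE_mulVec_le_of_le hM (hgbd xstar hx0)
    _ = _ := by ring

/-- Theorem 2 of the paper (multiplier error bound), stated deterministically:
`‖Y_k − y_⋆‖ ≤ κ_y ‖X_k − x_⋆‖ + r⁻¹ ‖∇f(X_k) − G_k‖` with
`κ_y = κ_H L_c r⁻² + L_{∇f} r⁻¹ + κ_{∇f} L_M`. -/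
theorem multiplier_error_bound {n m : ℕ} (hmn : m ≤ n)
    (Jc : EuclideanSpace ℝ (Fin n) → Matrix (Fin n) (Fin m) ℝ)
    (cf : EuclideanSpace ℝ (Fin n) → EuclideanSpace ℝ (Fin m))
    (gradf : EuclideanSpace ℝ (Fin n) → EuclideanSpace ℝ (Fin n))
    (M : EuclideanSpace ℝ (Fin n) → Matrix (Fin m) (Fin n) ℝ)
    (Hm : EuclideanSpace ℝ (Fin n) → Matrix (Fin n) (Fin n) ℝ)
    (ε r Lc Lf κf κH LM : ℝ)
    (hε : 0 ≤ ε) (hr : 0 < r) (hLc : 0 < Lc) (hLf : 0 < Lf) (hκf : 0 < κf)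
    (hκH : 0 < κH) (hLM : 0 < LM)
    (xstar Xk Gk : EuclideanSpace ℝ (Fin n))
    (hXk : Xk ∈ closedBall xstar ε)
    (hcstar : cf xstar = 0)
    -- Lipschitz continuity of `c`, `∇f`, and `M` on the neighborhood
    (hcLip : ∀ x ∈ closedBall xstar ε, ∀ x' ∈ closedBall xstar ε,
      ‖cf x - cf x'‖ ≤ Lc * ‖x - x'‖)
    (hgLip : ∀ x ∈ closedBall xstar ε, ∀ x' ∈ closedBall xstar ε,
      ‖gradf x - gradf x'‖ ≤ Lf * ‖x - x'‖)
    (hMLip : ∀ x ∈ closedBall xstar ε, ∀ x' ∈ closedBall xstar ε,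
      ‖M x - M x'‖ ≤ LM * ‖x - x'‖)
    -- bounds on the neighborhood
    (hgbd : ∀ x ∈ closedBall xstar ε, ‖gradf x‖ ≤ κf)
    (hHbd : ∀ x ∈ closedBall xstar ε, ‖Hm x‖ ≤ κH)
    (hMbd : ∀ x ∈ closedBall xstar ε, ‖M x‖ ≤ r⁻¹)
    (hsmin : ∀ x ∈ closedBall xstar ε, ∀ w : EuclideanSpace ℝ (Fin m),
      r * ‖w‖ ≤ ‖toE (Jc x *ᵥ toV w)‖)
    -- multiplier formulas
    (Yk : EuclideanSpace ℝ (Fin m)) (ystar : EuclideanSpace ℝ (Fin m))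
    (hYk : Yk = toE (M Xk *ᵥ
      (Hm Xk *ᵥ ((Jc Xk).pinvᵀ *ᵥ toV (cf Xk)) - toV Gk)))
    (hystar : ystar = -toE (M xstar *ᵥ toV (gradf xstar))) :
    ‖Yk - ystar‖ ≤ (κH * Lc * r⁻¹ ^ 2 + Lf * r⁻¹ + κf * LM) * ‖Xk - xstar‖ +
      r⁻¹ * ‖gradf Xk - Gk‖ :=
  multiplier_error_bound_general Jc cf gradf M Hm ε r Lc Lf κf κH LM hr xstar Xk Gk hXk hcstar hcLip
    hgLip hMLip hgbd hHbd hMbd hsmin Yk ystar hYk hystar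
end
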